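/- Let WN = (P,T,F,i,o) be a sound acyclic free-choice workflow net (AFW-net). For every place y ∈ P, every node x with (x,y) ∈ ∥, and every transition s ∈ y•: there is no acyclic path from x to s if and only if (x,s) ∈ ∥. -/

import Mathlib

/-- A Petri net: finite disjoint sets of places and transitions and a flow relation
`F ⊆ (P × T) ∪ (T × P)`. -/
structure PetriNet (α : Type) [DecidableEq α] where
  places : Finset α
  transitions : Finset α
  flow : Finset (α × α)
  disjoint_pt : Disjoint places transitions
  flow_mem : ∀ e ∈ flow,
    (e.1 ∈ places ∧ e.2 ∈ transitions) ∨ (e.1 ∈ transitions ∧ e.2 ∈ places)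

namespace PetriNet

variable {α : Type} [DecidableEq α]

/-- All nodes `P ∪ T` of the net. -/
def nodes (N : PetriNet α) : Finset α := N.places ∪ N.transitions

/-- The preset `•x` of a node. -/
def preset (N : PetriNet α) (x : α) : Finset α :=
  N.nodes.filter (fun p => (p, x) ∈ N.flow)

/-- The postset `x•` of a node. -/
def postset (N : PetriNet α) (x : α) : Finset α :=
  N.nodes.filter (fun s => (x, s) ∈ N.flow)

/-- A path: a nonempty sequence of nodes, each consecutive pair related by the flow. -/
def IsPath (N : PetriNet α) (w : List α) : Prop :=
  w ≠ [] ∧ (∀ x ∈ w, x ∈ N.nodes) ∧ w.Chain' (fun a b => (a, b) ∈ N.flow)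

/-- An acyclic path: a path whose nodes are pairwise distinct. -/
def IsAcyclicPath (N : PetriNet α) (w : List α) : Prop :=
  N.IsPath w ∧ w.Nodup

/-- There is an acyclic path from `x` to `y`. -/
def HasAcyclicPath (N : PetriNet α) (x y : α) : Prop :=
  ∃ w, N.IsAcyclicPath w ∧ w.head? = some x ∧ w.getLast? = some y

/-- `HasPath(x)`: the set of all nodes to which `x` has an acyclic path
(including `x` itself, via the trivial path `(x)` when `x` is a node). -/
def HasPathSet (N : PetriNet α) (x : α) : Set α := {y | N.HasAcyclicPath x y}

/-- A net is acyclic iff no node has a nontrivial path to itself. -/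
def Acyclic (N : PetriNet α) : Prop :=
  ∀ x, ¬ ∃ w, N.IsPath w ∧ 2 ≤ w.length ∧ w.head? = some x ∧ w.getLast? = some x

/-- A transition `t` is enabled in marking `M` iff all its input places carry a token. -/
def Enabled (N : PetriNet α) (M : α → ℕ) (t : α) : Prop :=
  t ∈ N.transitions ∧ ∀ p ∈ N.preset t, 1 ≤ M p

/-- Firing `t` consumes one token from each input place and produces one on each output place. -/
def fire (N : PetriNet α) (M : α → ℕ) (t : α) : α → ℕ := fun p =>
  (M p - (if p ∈ N.preset t then 1 else 0)) + (if p ∈ N.postset t then 1 else 0)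

/-- A step `M —t→ M'`. -/
def Step (N : PetriNet α) (M : α → ℕ) (t : α) (M' : α → ℕ) : Prop :=
  N.Enabled M t ∧ M' = N.fire M t

/-- Reachability via finite occurrence sequences. -/
def Reachable (N : PetriNet α) : (α → ℕ) → (α → ℕ) → Prop :=
  Relation.ReflTransGen (fun M M' => ∃ t, N.Step M t M')

/-- Liveness with respect to an initial marking. -/
def Live (N : PetriNet α) (M₀ : α → ℕ) : Prop :=
  ∀ M, N.Reachable M₀ M → ∀ t ∈ N.transitions, ∃ M', N.Reachable M M' ∧ N.Enabled M' t

/-- Boundedness with respect to an initial marking. -/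
def Bounded (N : PetriNet α) (M₀ : α → ℕ) : Prop :=
  ∃ n : ℕ, ∀ M, N.Reachable M₀ M → ∀ p ∈ N.places, M p ≤ n

/-- Free-choice: every place with more than one output transition is the unique
input of each of those transitions. -/
def FreeChoice (N : PetriNet α) : Prop :=
  ∀ p ∈ N.places, 1 < (N.postset p).card → ∀ t ∈ N.postset p, N.preset t = {p}

/-- A node is active in `M` iff it is a place carrying a token or an enabled transition. -/
def Active (N : PetriNet α) (x : α) (M : α → ℕ) : Prop :=
  (x ∈ N.places ∧ 1 ≤ M x) ∨ (x ∈ N.transitions ∧ N.Enabled M x)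

/-- One unfolding of the defining clauses of the concurrency relation. -/
def concStep (N : PetriNet α) (M₀ : α → ℕ) (R : Set (α × α)) : Set (α × α) :=
  {q | q.1 ≠ q.2 ∧
    (∃ M, N.Reachable M₀ M ∧ N.Active q.1 M ∧ N.Active q.2 M) ∧
    (q.1 ∈ N.transitions → q.2 ∈ N.places → ∀ z ∈ N.preset q.1, (z, q.2) ∈ R) ∧
    (q.1 ∈ N.places → q.2 ∈ N.transitions → ∀ z ∈ N.preset q.2, (z, q.1) ∈ R) ∧
    (q.1 ∈ N.transitions → q.2 ∈ N.transitions →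
      ∀ z ∈ N.preset q.1, ∀ z' ∈ N.preset q.2, (z, z') ∈ R)}

/-- The concurrency relation `∥`: the greatest relation consistent with its
defining clauses (Def. of concurrency). -/
def Concurrent (N : PetriNet α) (M₀ : α → ℕ) : Set (α × α) :=
  ⋃₀ {R | R ⊆ N.concStep M₀ R}

/-- The number of places on `w` carrying at least one token in `M`. -/
def tokensOn (N : PetriNet α) (M : α → ℕ) (w : List α) : ℕ :=
  (w.toFinset.filter (fun p => p ∈ N.places ∧ 1 ≤ M p)).card

end PetriNet

/-- A workflow net: a Petri net with a source place `i` (`•i = ∅`), a sink place `o`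
(`o• = ∅`), and every node on a path from `i` to `o`. -/
structure WorkflowNet (α : Type) [DecidableEq α] extends PetriNet α where
  source : α
  sink : α
  source_mem : source ∈ places
  sink_mem : sink ∈ places
  source_no_pre : toPetriNet.preset source = ∅
  sink_no_post : toPetriNet.postset sink = ∅
  all_on_path : ∀ x ∈ toPetriNet.nodes, ∃ w, toPetriNet.IsPath w ∧
    w.head? = some source ∧ w.getLast? = some sink ∧ x ∈ w

namespace WorkflowNet

variable {α : Type} [DecidableEq α]

/-- The initial marking: one token on the source, none elsewhere. -/
def initialMarking (W : WorkflowNet α) : α → ℕ := fun p => if p = W.source then 1 else 0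

/-- The terminal marking: one token on the sink, none elsewhere. -/
def terminalMarking (W : WorkflowNet α) : α → ℕ := fun p => if p = W.sink then 1 else 0

/-- Soundness of a workflow net. -/
def Sound (W : WorkflowNet α) : Prop :=
  (∀ M, W.toPetriNet.Reachable W.initialMarking M →
    W.toPetriNet.Reachable M W.terminalMarking ∧ (1 ≤ M W.sink → M = W.terminalMarking)) ∧
  (∀ t ∈ W.transitions, ∃ M M', W.toPetriNet.Reachable W.initialMarking M ∧
    W.toPetriNet.Step M t M')

end WorkflowNet

/-!
Causal order is the reflexive-transitive closure of the flow relation. The heart of the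
argument is that in a sound acyclic free-choice workflow net no reachable marking is
*overloaded*, i.e. puts two tokens on a place or marks two causally ordered places. From an
overloaded marking one can always fire some transition and stay overloaded (free choice lets
us swap the transition that would separate the two ordered tokens for one that moves them
closer). Since `∑ M x · #(paths from x)` strictly decreases under firing, this must end in a
dead marking, which soundness forbids, as the terminal marking is not overloaded. This gives
"concurrent ⇒ no path".

Conversely, let there be no path from `x` to `s ∈ y•`. If `y` has another output transition,
free choice makes `s` enabled as soon as `y` is marked. Otherwise `s` is the only consumer of
`y`, and soundness forces the token on `y` to be consumed; the run up to that point, restricted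
to the causal past of `s`, still enables `s` and never consumes from `x` (a transition `x` is
fired first and then postponed past the restricted run). So `x` and `s` are active together,
and their input places are concurrent because they are marked together.
-/

open Relation

namespace PetriNet

variable {α : Type} [DecidableEq α] {N : PetriNet α}

def Flows (N : PetriNet α) (a b : α) : Prop := (a, b) ∈ N.flow

theorem Flows.mem_nodes {a b : α} (h : N.Flows a b) : a ∈ N.nodes ∧ b ∈ N.nodes := by
  rcases N.flow_mem _ h with ⟨ha, hb⟩ | ⟨ha, hb⟩
  · exact ⟨Finset.mem_union_left _ ha, Finset.mem_union_right _ hb⟩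
  · exact ⟨Finset.mem_union_right _ ha, Finset.mem_union_left _ hb⟩

theorem mem_preset {p x : α} : p ∈ N.preset x ↔ N.Flows p x := by
  simp only [preset, Finset.mem_filter]
  exact ⟨And.right, fun h => ⟨(Flows.mem_nodes h).1, h⟩⟩

theorem mem_postset {x s : α} : s ∈ N.postset x ↔ N.Flows x s := by
  simp only [postset, Finset.mem_filter]
  exact ⟨And.right, fun h => ⟨(Flows.mem_nodes h).2, h⟩⟩

theorem notMem_transitions_of_mem_places {x : α} (hx : x ∈ N.places) : x ∉ N.transitions :=
  Finset.disjoint_left.mp N.disjoint_pt hx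

theorem Flows.right_mem_transitions {a b : α} (h : N.Flows a b) (ha : a ∈ N.places) :
    b ∈ N.transitions :=
  (N.flow_mem _ h).elim And.right fun h' => absurd h'.1 (notMem_transitions_of_mem_places ha)

theorem Flows.right_mem_places {a b : α} (h : N.Flows a b) (ha : a ∈ N.transitions) :
    b ∈ N.places :=
  (N.flow_mem _ h).elim (fun h' => absurd ha (notMem_transitions_of_mem_places h'.1)) And.right

theorem Flows.left_mem_places {a b : α} (h : N.Flows a b) (hb : b ∈ N.transitions) :
    a ∈ N.places :=
  (N.flow_mem _ h).elim And.left fun h' => absurd hb (notMem_transitions_of_mem_places h'.2)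

theorem isPath_singleton {x : α} : N.IsPath [x] ↔ x ∈ N.nodes :=
  ⟨fun h => h.2.1 x (List.mem_singleton_self x),
    fun hx => ⟨List.cons_ne_nil _ _, by simpa using hx, .singleton x⟩⟩

theorem isPath_cons_cons {x y : α} {w : List α} :
    N.IsPath (x :: y :: w) ↔ N.Flows x y ∧ N.IsPath (y :: w) := by
  constructor
  · rintro ⟨-, hmem, hc⟩
    obtain ⟨hxy, hc⟩ := List.isChain_cons_cons.mp hc
    exact ⟨hxy, List.cons_ne_nil _ _, (List.forall_mem_cons.mp hmem).2, hc⟩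
  · rintro ⟨hxy, -, hmem, hc⟩
    exact ⟨List.cons_ne_nil _ _, List.forall_mem_cons.mpr ⟨hxy.mem_nodes.1, hmem⟩,
      List.isChain_cons_cons.mpr ⟨hxy, hc⟩⟩

theorem IsPath.reflTransGen_of_mem {w : List α} {x z : α} (hw : N.IsPath w)
    (hx : w.head? = some x) (hz : z ∈ w) : ReflTransGen N.Flows x z :=
  hw.2.2.induction (ReflTransGen N.Flows x) _ (fun _ _ h hxa => hxa.tail h)
    (fun hne => by rw [List.head?_eq_some_head hne, Option.some_inj] at hx; rw [hx]) z hz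

theorem IsPath.reflTransGen_of_mem' {w : List α} {y z : α} (hw : N.IsPath w)
    (hy : w.getLast? = some y) (hz : z ∈ w) : ReflTransGen N.Flows z y :=
  hw.2.2.backwards_induction (ReflTransGen N.Flows · y) _ (fun _ _ h hay => hay.head h)
    (fun hne => by rw [List.getLast?_eq_some_getLast hne, Option.some_inj] at hy; rw [hy]) z hz

theorem exists_isPath_of_reflTransGen {x y : α} (hx : x ∈ N.nodes)
    (h : ReflTransGen N.Flows x y) : ∃ w, N.IsPath (x :: w) ∧ (x :: w).getLast? = some y := by
  induction h using ReflTransGen.head_induction_on with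
  | refl => exact ⟨[], isPath_singleton.mpr hx, rfl⟩
  | head hxc hcy ih =>
    obtain ⟨w, hw, hlast⟩ := ih hxc.mem_nodes.2
    exact ⟨_ :: w, isPath_cons_cons.mpr ⟨hxc, hw⟩, by simpa [List.getLast?_cons_cons] using hlast⟩

theorem Acyclic.irrefl (hacyc : N.Acyclic) {x : α} : ¬ TransGen N.Flows x x := by
  intro hx
  obtain ⟨c, hxc, hcx⟩ := TransGen.head'_iff.mp hx
  obtain ⟨w, hw, hlast⟩ := exists_isPath_of_reflTransGen hxc.mem_nodes.2 hcx
  exact hacyc x ⟨x :: c :: w, isPath_cons_cons.mpr ⟨hxc, hw⟩, by simp, rfl,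
    by simpa [List.getLast?_cons_cons] using hlast⟩

theorem Acyclic.nodup (hacyc : N.Acyclic) : ∀ {w : List α}, N.IsPath w → w.Nodup
  | [], _ => List.nodup_nil
  | [_], _ => List.nodup_singleton _
  | x :: y :: w, hw => by
    obtain ⟨hxy, hyw⟩ := isPath_cons_cons.mp hw
    exact List.nodup_cons.mpr ⟨fun hx => hacyc.irrefl
      (TransGen.head' hxy (hyw.reflTransGen_of_mem rfl hx)), hacyc.nodup hyw⟩

theorem Acyclic.hasAcyclicPath_iff (hacyc : N.Acyclic) {x y : α} :
    N.HasAcyclicPath x y ↔ x ∈ N.nodes ∧ ReflTransGen N.Flows x y := by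
  constructor
  · rintro ⟨w, ⟨hw, -⟩, hx, hy⟩
    exact ⟨hw.2.1 x (List.mem_of_mem_head? hx),
      hw.reflTransGen_of_mem hx (List.mem_of_mem_getLast? hy)⟩
  · rintro ⟨hx, h⟩
    obtain ⟨w, hw, hy⟩ := exists_isPath_of_reflTransGen hx h
    exact ⟨x :: w, ⟨hw, hacyc.nodup hw⟩, rfl, hy⟩

section Firing

variable {M M' : α → ℕ} {t p : α}

theorem le_fire_of_notMem_preset (h : p ∉ N.preset t) : M p ≤ N.fire M t p := by
  unfold fire; rw [if_neg h]; omega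

theorem fire_le_of_notMem_postset (h : p ∉ N.postset t) : N.fire M t p ≤ M p := by
  unfold fire; rw [if_neg h]; omega

theorem fire_of_mem_postset_of_notMem_preset (hpost : p ∈ N.postset t) (hpre : p ∉ N.preset t) :
    N.fire M t p = M p + 1 := by
  simp [fire, hpost, hpre]

theorem sub_one_le_fire : M p - 1 ≤ N.fire M t p := by
  unfold fire; split_ifs <;> omega

theorem fire_le_fire (h : M p ≤ M' p) : N.fire M t p ≤ N.fire M' t p := by
  unfold fire; split_ifs <;> omega

theorem fire_comm {u : α} (ht : N.Enabled M t) (hu : N.Enabled M u)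
    (htu : N.Enabled (N.fire M t) u) (hut : N.Enabled (N.fire M u) t) :
    N.fire (N.fire M t) u = N.fire (N.fire M u) t := by
  funext p
  have h₁ := ht.2 p; have h₂ := hu.2 p; have h₃ := htu.2 p; have h₄ := hut.2 p
  unfold fire at h₃ h₄ ⊢
  by_cases hpt : p ∈ N.preset t <;> by_cases hpu : p ∈ N.preset u <;> simp_all <;> omega

end Firing

def IsFiringSeq (N : PetriNet α) : (α → ℕ) → List α → Prop
  | _, [] => True
  | M, t :: ts => N.Enabled M t ∧ N.IsFiringSeq (N.fire M t) ts

def fireSeq (N : PetriNet α) (M : α → ℕ) (ts : List α) : α → ℕ := ts.foldl N.fire M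

@[simp] theorem fireSeq_nil (M : α → ℕ) : N.fireSeq M [] = M := rfl

@[simp] theorem fireSeq_cons (M : α → ℕ) (t : α) (ts : List α) :
    N.fireSeq M (t :: ts) = N.fireSeq (N.fire M t) ts := rfl

theorem reachable_iff_exists_isFiringSeq {M M' : α → ℕ} :
    N.Reachable M M' ↔ ∃ ts, N.IsFiringSeq M ts ∧ N.fireSeq M ts = M' := by
  constructor
  · intro h
    induction h using ReflTransGen.head_induction_on with
    | refl => exact ⟨[], trivial, rfl⟩
    | head hstep _ ih =>
      obtain ⟨t, hen, rfl⟩ := hstep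
      obtain ⟨ts, hts, rfl⟩ := ih
      exact ⟨t :: ts, ⟨hen, hts⟩, rfl⟩
  · rintro ⟨ts, hts, rfl⟩
    induction ts generalizing M with
    | nil => exact .refl
    | cons t ts ih => exact .head ⟨t, hts.1, rfl⟩ (ih hts.2)

theorem le_fireSeq_of_notMem_preset {p : α} :
    ∀ {ts : List α} {M : α → ℕ}, (∀ t ∈ ts, p ∉ N.preset t) → M p ≤ N.fireSeq M ts p
  | [], _, _ => le_rfl
  | t :: _, _, h => (le_fire_of_notMem_preset (h t List.mem_cons_self)).trans
      (le_fireSeq_of_notMem_preset fun t' ht' => h t' (List.mem_cons_of_mem _ ht'))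

theorem IsFiringSeq.exists_enabled {y s : α} (hys : ∀ t, N.Flows y t → t = s) :
    ∀ {ts : List α} {M : α → ℕ}, N.IsFiringSeq M ts → 1 ≤ M y → N.fireSeq M ts y = 0 →
      ∃ ts', N.IsFiringSeq M ts' ∧ N.Enabled (N.fireSeq M ts') s
  | [], _, _, hy, h0 => by simp at h0; omega
  | t :: ts, M, ⟨ht, hts⟩, hy, h0 => by
    by_cases hts' : t = s
    · exact ⟨[], trivial, hts' ▸ ht⟩
    · have hyt : y ∉ N.preset t := fun h => hts' (hys t (mem_preset.mp h))
      obtain ⟨ts', hts', hs⟩ := hts.exists_enabled hys (hy.trans (le_fire_of_notMem_preset hyt)) h0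
      exact ⟨t :: ts', ⟨ht, hts'⟩, hs⟩

theorem IsFiringSeq.filter {S : Set α} [DecidablePred (· ∈ S)]
    (hS : ∀ ⦃a b⦄, N.Flows a b → b ∈ S → a ∈ S) :
    ∀ {ts : List α} {M M' : α → ℕ}, N.IsFiringSeq M ts → (∀ p ∈ S, M p ≤ M' p) →
      N.IsFiringSeq M' (ts.filter (· ∈ S)) ∧
        ∀ p ∈ S, N.fireSeq M ts p ≤ N.fireSeq M' (ts.filter (· ∈ S)) p
  | [], _, _, _, hle => ⟨trivial, hle⟩
  | t :: ts, M, M', ⟨ht, hts⟩, hle => by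
    by_cases htS : t ∈ S
    · have ht' : N.Enabled M' t :=
        ⟨ht.1, fun p hp => (ht.2 p hp).trans (hle p (hS (mem_preset.mp hp) htS))⟩
      obtain ⟨h₁, h₂⟩ := hts.filter hS fun p hp => fire_le_fire (hle p hp)
      simpa [List.filter_cons_of_pos, htS] using And.intro ⟨ht', h₁⟩ h₂
    · obtain ⟨h₁, h₂⟩ := hts.filter hS (M' := M') fun p hp =>
        (fire_le_of_notMem_postset fun hpt => htS (hS (mem_postset.mp hpt) hp)).trans (hle p hp)
      simpa [List.filter_cons_of_neg, htS] using And.intro h₁ h₂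

theorem IsFiringSeq.postpone {x : α} :
    ∀ {σ : List α} {M : α → ℕ}, N.IsFiringSeq M (x :: σ) →
      (∀ t ∈ σ, Disjoint (N.preset t) (N.postset x)) →
      N.IsFiringSeq M σ ∧ N.Enabled (N.fireSeq M σ) x ∧
        N.fire (N.fireSeq M σ) x = N.fireSeq (N.fire M x) σ
  | [], _, ⟨hx, _⟩, _ => ⟨trivial, hx, rfl⟩
  | t :: σ, M, ⟨hx, ht', hσ⟩, hd => by
    have hdt := Finset.disjoint_left.mp (hd t List.mem_cons_self)
    have ht : N.Enabled M t :=
      ⟨ht'.1, fun p hp => (ht'.2 p hp).trans (fire_le_of_notMem_postset (hdt hp))⟩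
    have hxt : N.Enabled (N.fire M t) x := by
      refine ⟨hx.1, fun p hp => ?_⟩
      by_cases hpt : p ∈ N.preset t
      · have h := ht'.2 p hpt
        have h' := hdt hpt
        unfold fire at h ⊢
        simp only [hp, hpt, h', if_true, if_false] at h ⊢
        omega
      · exact (hx.2 p hp).trans (le_fire_of_notMem_preset hpt)
    have hcomm := fire_comm ht hx hxt ht'
    obtain ⟨h₁, h₂, h₃⟩ := IsFiringSeq.postpone (σ := σ) ⟨hxt, hcomm ▸ hσ⟩
      fun t' ht'' => hd t' (List.mem_cons_of_mem _ ht'')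
    exact ⟨⟨ht, h₁⟩, h₂, h₃.trans (by rw [hcomm]; rfl)⟩

open Classical in
noncomputable def pathsFrom (N : PetriNet α) (x : α) : Finset (List α) :=
  (N.nodes.toList.sublists.flatMap List.permutations).toFinset.filter
    fun w => N.IsAcyclicPath w ∧ w.head? = some x

open Classical in
theorem mem_pathsFrom {x : α} {w : List α} :
    w ∈ N.pathsFrom x ↔ N.IsAcyclicPath w ∧ w.head? = some x := by
  refine ⟨fun h => (Finset.mem_filter.mp h).2, fun h => Finset.mem_filter.mpr ⟨?_, h⟩⟩
  obtain ⟨l, hperm, hsub⟩ := h.1.2.subperm fun z hz => Finset.mem_toList.mpr (h.1.1.2.1 z hz)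
  exact List.mem_toFinset.mpr
    (List.mem_flatMap.mpr ⟨l, List.mem_sublists.mpr hsub, List.mem_permutations.mpr hperm.symm⟩)

theorem sum_card_pathsFrom_postset_lt (hacyc : N.Acyclic) {t z : α} (hz : z ∈ N.preset t) :
    ∑ u ∈ N.postset t, (N.pathsFrom u).card < (N.pathsFrom z).card := by
  have hzt := mem_preset.mp hz
  have hdisj : (N.postset t : Set α).PairwiseDisjoint N.pathsFrom := by
    intro u _ v _ huv
    refine Finset.disjoint_left.mpr fun w hu hv => huv ?_
    exact Option.some_inj.mp ((mem_pathsFrom.mp hu).2.symm.trans (mem_pathsFrom.mp hv).2)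
  have hmaps : ∀ w ∈ (N.postset t).biUnion N.pathsFrom,
      z :: t :: w ∈ (N.pathsFrom z).erase [z] := by
    intro w hw
    obtain ⟨u, hu, hw⟩ := Finset.mem_biUnion.mp hw
    obtain ⟨⟨hpath, -⟩, hhead⟩ := mem_pathsFrom.mp hw
    obtain ⟨w', rfl⟩ : ∃ w', w = u :: w' := List.head?_eq_some_iff.mp hhead
    have hpath' : N.IsPath (z :: t :: u :: w') :=
      isPath_cons_cons.mpr ⟨hzt, isPath_cons_cons.mpr ⟨mem_postset.mp hu, hpath⟩⟩
    exact Finset.mem_erase.mpr ⟨by simp, mem_pathsFrom.mpr ⟨⟨hpath', hacyc.nodup hpath'⟩, rfl⟩⟩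
  have hsingleton : [z] ∈ N.pathsFrom z :=
    mem_pathsFrom.mpr ⟨⟨isPath_singleton.mpr hzt.mem_nodes.1, List.nodup_singleton z⟩, rfl⟩
  calc ∑ u ∈ N.postset t, (N.pathsFrom u).card
      = ((N.postset t).biUnion N.pathsFrom).card := (Finset.card_biUnion hdisj).symm
    _ ≤ ((N.pathsFrom z).erase [z]).card :=
      Finset.card_le_card_of_injOn _ hmaps fun _ _ _ _ h => by simpa using h
    _ < (N.pathsFrom z).card := Finset.card_erase_lt_of_mem hsingleton

noncomputable def weight (N : PetriNet α) (M : α → ℕ) : ℕ :=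
  ∑ x ∈ N.nodes, M x * (N.pathsFrom x).card

theorem weight_fire_lt (hacyc : N.Acyclic) {M : α → ℕ} {t : α} (ht : N.Enabled M t)
    (hpre : (N.preset t).Nonempty) : N.weight (N.fire M t) < N.weight M := by
  obtain ⟨z, hz⟩ := hpre
  have hsum (S : Finset α) (hS : S ⊆ N.nodes) :
      ∑ x ∈ N.nodes, (if x ∈ S then 1 else 0) * (N.pathsFrom x).card =
        ∑ x ∈ S, (N.pathsFrom x).card := by
    simp only [ite_mul, one_mul, zero_mul, Finset.sum_ite_mem, Finset.inter_eq_right.mpr hS]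
  have hbalance : N.weight (N.fire M t) + ∑ x ∈ N.preset t, (N.pathsFrom x).card =
      N.weight M + ∑ x ∈ N.postset t, (N.pathsFrom x).card := by
    rw [← hsum (N.preset t) (Finset.filter_subset _ _),
      ← hsum (N.postset t) (Finset.filter_subset _ _), weight, weight, ← Finset.sum_add_distrib, ← Finset.sum_add_distrib]
    refine Finset.sum_congr rfl fun x _ => ?_
    rw [← add_mul, ← add_mul]
    congr 1
    unfold fire
    by_cases hx : x ∈ N.preset t
    · have := ht.2 x hx
      split_ifs <;> omega
    · split_ifs <;> omega
  have := sum_card_pathsFrom_postset_lt hacyc hz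
  have := Finset.single_le_sum (f := fun x => (N.pathsFrom x).card) (fun _ _ => Nat.zero_le _) hz
  omega

section Overloaded

variable {M : α → ℕ}

theorem FreeChoice.preset_eq_singleton (hfc : N.FreeChoice) {a t s : α} (ha : a ∈ N.places)
    (hat : N.Flows a t) (has : N.Flows a s) (hts : t ≠ s) : N.preset s = {a} :=
  hfc a ha (Finset.one_lt_card.mpr ⟨t, mem_postset.mpr hat, s, mem_postset.mpr has, hts⟩) s
    (mem_postset.mpr has)

def Overloaded (N : PetriNet α) (M : α → ℕ) : Prop :=
  (∃ a ∈ N.places, 2 ≤ M a) ∨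
    ∃ a ∈ N.places, ∃ b ∈ N.places, 1 ≤ M a ∧ 1 ≤ M b ∧ TransGen N.Flows a b

theorem overloaded_fire_of_reflTransGen_preset (hacyc : N.Acyclic) {t c p : α}
    (hpost : (N.postset t).Nonempty) (ht : N.Enabled M t) (hc : c ∈ N.places)
    (hMc : 1 ≤ N.fire M t c) (hcp : ReflTransGen N.Flows c p) (hp : p ∈ N.preset t) :
    N.Overloaded (N.fire M t) := by
  obtain ⟨u, hu⟩ := hpost
  have htu := mem_postset.mp hu
  have hut : u ∉ N.preset t := fun h => hacyc.irrefl (.head htu (.single (mem_preset.mp h)))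
  refine Or.inr ⟨c, hc, u, htu.right_mem_places ht.1, hMc, ?_, ?_⟩
  · rw [fire_of_mem_postset_of_notMem_preset hu hut]; omega
  · exact .tail' (hcp.tail (mem_preset.mp hp)) htu

theorem overloaded_fire_of_reflTransGen_marked (hacyc : N.Acyclic) {s b : α}
    (hs : N.Enabled M s) (hb : b ∈ N.places) (hMb : 1 ≤ M b) (hbs : b ∉ N.preset s)
    (hsb : ReflTransGen N.Flows s b) : N.Overloaded (N.fire M s) := by
  have hsb' : TransGen N.Flows s b := (reflTransGen_iff_eq_or_transGen.mp hsb).resolve_left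
    fun h => notMem_transitions_of_mem_places hb (h ▸ hs.1)
  obtain ⟨p, hsp, hpb⟩ := TransGen.head'_iff.mp hsb'
  have hps : p ∉ N.preset s := fun h => hacyc.irrefl (.head hsp (.single (mem_preset.mp h)))
  have hMp := fire_of_mem_postset_of_notMem_preset (M := M) (mem_postset.mpr hsp) hps
  rcases reflTransGen_iff_eq_or_transGen.mp hpb with rfl | hpb
  · exact Or.inl ⟨b, hb, by omega⟩
  · exact Or.inr ⟨p, hsp.right_mem_places hs.1, b, hb, by omega,
      hMb.trans (le_fire_of_notMem_preset hbs), hpb⟩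

theorem exists_fire_overloaded_of_transGen (hfc : N.FreeChoice) (hacyc : N.Acyclic)
    (hpost : ∀ t ∈ N.transitions, (N.postset t).Nonempty) {t a b : α} (ht : N.Enabled M t)
    (ha : a ∈ N.places) (hb : b ∈ N.places) (hMa : 1 ≤ M a) (hMb : 1 ≤ M b)
    (hab : TransGen N.Flows a b) : ∃ t', N.Enabled M t' ∧ N.Overloaded (N.fire M t') := by
  obtain ⟨s, has, hsb⟩ := TransGen.head'_iff.mp hab
  by_cases hbt : b ∈ N.preset t
  · have hat : a ∉ N.preset t := by
      intro hat
      by_cases hts : t = s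
      · exact hacyc.irrefl (.tail' (hts ▸ hsb) (mem_preset.mp hbt))
      · rw [hfc.preset_eq_singleton ha has (mem_preset.mp hat) (Ne.symm hts),
          Finset.mem_singleton] at hbt
        exact hacyc.irrefl (hbt ▸ hab)
    exact ⟨t, ht, overloaded_fire_of_reflTransGen_preset hacyc (hpost t ht.1) ht ha
      (hMa.trans (le_fire_of_notMem_preset hat)) hab.to_reflTransGen hbt⟩
  by_cases hat : a ∈ N.preset t
  -- `t` would take the token from `a`; by free choice `s`, which leads to `b`, is enabled too.
  · obtain ⟨hs, hbs⟩ : N.Enabled M s ∧ b ∉ N.preset s := by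
      by_cases hts : t = s
      · exact hts ▸ ⟨ht, hbt⟩
      have hpre := hfc.preset_eq_singleton ha (mem_preset.mp hat) has hts
      refine ⟨⟨has.right_mem_transitions ha, fun p hp => ?_⟩, fun hba => ?_⟩
      · rw [hpre, Finset.mem_singleton] at hp; exact hp ▸ hMa
      · rw [hpre, Finset.mem_singleton] at hba; exact hacyc.irrefl (hba ▸ hab)
    exact ⟨s, hs, overloaded_fire_of_reflTransGen_marked hacyc hs hb hMb hbs hsb⟩
  exact ⟨t, ht, Or.inr ⟨a, ha, b, hb, hMa.trans (le_fire_of_notMem_preset hat),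
    hMb.trans (le_fire_of_notMem_preset hbt), hab⟩⟩

theorem Overloaded.exists_fire_overloaded (hM : N.Overloaded M) (hfc : N.FreeChoice)
    (hacyc : N.Acyclic) (hpost : ∀ t ∈ N.transitions, (N.postset t).Nonempty) {t : α}
    (ht : N.Enabled M t) : ∃ t', N.Enabled M t' ∧ N.Overloaded (N.fire M t') := by
  rcases hM with ⟨a, ha, hMa⟩ | ⟨a, ha, b, hb, hMa, hMb, hab⟩
  · refine ⟨t, ht, ?_⟩
    by_cases hat : a ∈ N.preset t
    · have := sub_one_le_fire (N := N) (M := M) (t := t) (p := a)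
      exact overloaded_fire_of_reflTransGen_preset hacyc (hpost t ht.1) ht ha (by omega) .refl hat
    · exact Or.inl ⟨a, ha, hMa.trans (le_fire_of_notMem_preset hat)⟩
  · exact exists_fire_overloaded_of_transGen hfc hacyc hpost ht ha hb hMa hMb hab

end Overloaded

section Concurrency

variable {M₀ M : α → ℕ} {x : α}

theorem Active.mem_nodes (h : N.Active x M) : x ∈ N.nodes :=
  h.elim (fun h => Finset.mem_union_left _ h.1) fun h => Finset.mem_union_right _ h.1

theorem Active.one_le (h : N.Active x M) (hx : x ∈ N.places) : 1 ≤ M x :=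
  h.elim And.right fun h => absurd h.1 (notMem_transitions_of_mem_places hx)

theorem Active.enabled (h : N.Active x M) (hx : x ∈ N.transitions) : N.Enabled M x :=
  h.elim (fun h => absurd hx (notMem_transitions_of_mem_places h.1)) And.right

theorem concStep_mono {R R' : Set (α × α)} (h : R ⊆ R') :
    N.concStep M₀ R ⊆ N.concStep M₀ R' := by
  rintro q ⟨hne, hM, hTP, hPT, hTT⟩
  exact ⟨hne, hM, fun ha hb z hz => h (hTP ha hb z hz), fun ha hb z hz => h (hPT ha hb z hz),
    fun ha hb z hz z' hz' => h (hTT ha hb z hz z' hz')⟩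

-- `Concurrent` unfolds to the greatest fixed point `OrderHom.gfp` of `concStep`.
theorem concStep_concurrent : N.concStep M₀ (N.Concurrent M₀) = N.Concurrent M₀ :=
  OrderHom.map_gfp ⟨N.concStep M₀, fun _ _ => concStep_mono⟩

theorem mem_concurrent_iff {q : α × α} :
    q ∈ N.Concurrent M₀ ↔ q ∈ N.concStep M₀ (N.Concurrent M₀) := by
  rw [concStep_concurrent]

variable {a b z : α}

theorem ne_of_mem_concurrent (h : (a, b) ∈ N.Concurrent M₀) : a ≠ b :=
  (mem_concurrent_iff.mp h).1

theorem exists_reachable_active_of_mem_concurrent (h : (a, b) ∈ N.Concurrent M₀) :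
    ∃ M, N.Reachable M₀ M ∧ N.Active a M ∧ N.Active b M :=
  (mem_concurrent_iff.mp h).2.1

theorem mem_concurrent_of_preset_left (h : (a, b) ∈ N.Concurrent M₀) (ha : a ∈ N.transitions)
    (hb : b ∈ N.places) (hz : z ∈ N.preset a) : (z, b) ∈ N.Concurrent M₀ :=
  (mem_concurrent_iff.mp h).2.2.1 ha hb z hz

theorem mem_concurrent_of_preset_right (h : (a, b) ∈ N.Concurrent M₀) (ha : a ∈ N.places)
    (hb : b ∈ N.transitions) (hz : z ∈ N.preset b) : (z, a) ∈ N.Concurrent M₀ :=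
  (mem_concurrent_iff.mp h).2.2.2.1 ha hb z hz

theorem mem_concurrent_of_preset_preset {z' : α} (h : (a, b) ∈ N.Concurrent M₀)
    (ha : a ∈ N.transitions) (hb : b ∈ N.transitions) (hz : z ∈ N.preset a)
    (hz' : z' ∈ N.preset b) : (z, z') ∈ N.Concurrent M₀ :=
  (mem_concurrent_iff.mp h).2.2.2.2 ha hb z hz z' hz'

theorem mem_concurrent_of_marked_places (ha : a ∈ N.places) (hb : b ∈ N.places) (hab : a ≠ b)
    (hM : N.Reachable M₀ M) (hMa : 1 ≤ M a) (hMb : 1 ≤ M b) : (a, b) ∈ N.Concurrent M₀ :=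
  mem_concurrent_iff.mpr ⟨hab, ⟨M, hM, .inl ⟨ha, hMa⟩, .inl ⟨hb, hMb⟩⟩,
    fun h => absurd h (notMem_transitions_of_mem_places ha),
    fun _ h => absurd h (notMem_transitions_of_mem_places hb),
    fun h => absurd h (notMem_transitions_of_mem_places ha)⟩

end Concurrency

end PetriNet

namespace WorkflowNet

open PetriNet

variable {α : Type} [DecidableEq α] {W : WorkflowNet α}

theorem preset_nonempty {t : α} (ht : t ∈ W.transitions) : (W.preset t).Nonempty := by
  obtain ⟨w, hw, hsrc, -, htw⟩ := W.all_on_path t (Finset.mem_union_right _ ht)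
  have hne : t ≠ W.source := fun h => notMem_transitions_of_mem_places W.source_mem (h ▸ ht)
  obtain ⟨p, -, hpt⟩ := TransGen.tail'_iff.mp
    ((reflTransGen_iff_eq_or_transGen.mp (hw.reflTransGen_of_mem hsrc htw)).resolve_left hne)
  exact ⟨p, mem_preset.mpr hpt⟩

theorem postset_nonempty {t : α} (ht : t ∈ W.transitions) : (W.postset t).Nonempty := by
  obtain ⟨w, hw, -, hsink, htw⟩ := W.all_on_path t (Finset.mem_union_right _ ht)
  have hne : W.sink ≠ t := fun h => notMem_transitions_of_mem_places W.sink_mem (h ▸ ht)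
  obtain ⟨p, htp, -⟩ := TransGen.head'_iff.mp
    ((reflTransGen_iff_eq_or_transGen.mp (hw.reflTransGen_of_mem' hsink htw)).resolve_left hne)
  exact ⟨p, mem_postset.mpr htp⟩

theorem not_overloaded_terminalMarking (hacyc : W.Acyclic) : ¬ W.Overloaded W.terminalMarking := by
  have hsink {a : α} (h : 1 ≤ W.terminalMarking a) : a = W.sink := by
    unfold terminalMarking at h; split_ifs at h with ha <;> omega
  rintro (⟨a, -, h⟩ | ⟨a, -, b, -, ha, hb, hab⟩)
  · unfold terminalMarking at h; split_ifs at h <;> omega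
  · rw [hsink ha, hsink hb] at hab
    exact hacyc.irrefl hab

theorem Sound.not_overloaded (hsound : W.Sound) (hfc : W.FreeChoice) (hacyc : W.Acyclic)
    {M : α → ℕ} (hM : W.Reachable W.initialMarking M) : ¬ W.Overloaded M := by
  induction hw : W.weight M using Nat.strong_induction_on generalizing M with
  | _ n ih =>
  intro hover
  obtain ⟨t, ht⟩ : ∃ t, W.Enabled M t := by
    rcases (hsound.1 M hM).1.cases_head with rfl | ⟨_, ⟨t, ht, -⟩, -⟩
    · exact absurd hover (not_overloaded_terminalMarking hacyc)
    · exact ⟨t, ht⟩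
  obtain ⟨t', ht', hover'⟩ :=
    hover.exists_fire_overloaded hfc hacyc (fun _ => postset_nonempty) ht
  exact ih _ (hw ▸ weight_fire_lt hacyc ht' (preset_nonempty ht'.1))
    (hM.tail ⟨t', ht', rfl⟩) rfl hover'

variable {M : α → ℕ} {x y s : α}

theorem Sound.not_reflTransGen_of_marked (hsound : W.Sound) (hfc : W.FreeChoice)
    (hacyc : W.Acyclic) {p q : α} (hM : W.Reachable W.initialMarking M) (hp : p ∈ W.places)
    (hq : q ∈ W.places) (hMp : 1 ≤ M p) (hMq : 1 ≤ M q) (hpq : p ≠ q) :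
    ¬ ReflTransGen W.Flows p q := fun h => hsound.not_overloaded hfc hacyc hM
  (.inr ⟨p, hp, q, hq, hMp, hMq, (reflTransGen_iff_eq_or_transGen.mp h).resolve_left hpq.symm⟩)

theorem Sound.not_reflTransGen_of_mem_concurrent (hsound : W.Sound) (hfc : W.FreeChoice)
    (hacyc : W.Acyclic) {a b : α} (h : (a, b) ∈ W.Concurrent W.initialMarking) :
    ¬ ReflTransGen W.Flows a b := by
  have unordered {p q : α} (hpq : (p, q) ∈ W.Concurrent W.initialMarking) (hp : p ∈ W.places)
      (hq : q ∈ W.places) (hord : ReflTransGen W.Flows p q ∨ ReflTransGen W.Flows q p) : False := by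
    obtain ⟨M, hM, hMp, hMq⟩ := exists_reachable_active_of_mem_concurrent hpq
    have hne := ne_of_mem_concurrent hpq
    exact hord.elim
      (hsound.not_reflTransGen_of_marked hfc hacyc hM hp hq (hMp.one_le hp) (hMq.one_le hq) hne)
      (hsound.not_reflTransGen_of_marked hfc hacyc hM hq hp (hMq.one_le hq) (hMp.one_le hp)
        hne.symm)
  intro hab
  have hpred (hb : b ∈ W.transitions) : ∃ m ∈ W.preset b, ReflTransGen W.Flows a m := by
    obtain ⟨m, ham, hmb⟩ := TransGen.tail'_iff.mp
      ((reflTransGen_iff_eq_or_transGen.mp hab).resolve_left (ne_of_mem_concurrent h).symm)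
    exact ⟨m, mem_preset.mpr hmb, ham⟩
  obtain ⟨M, -, hMa, hMb⟩ := exists_reachable_active_of_mem_concurrent h
  rcases hMa with ⟨ha, -⟩ | ⟨ha, -⟩ <;> rcases hMb with ⟨hb, -⟩ | ⟨hb, -⟩
  · exact unordered h ha hb (.inl hab)
  · obtain ⟨m, hm, ham⟩ := hpred hb
    exact unordered (mem_concurrent_of_preset_right h ha hb hm)
      ((mem_preset.mp hm).left_mem_places hb) ha (.inr ham)
  · obtain ⟨z, hz⟩ := preset_nonempty ha
    exact unordered (mem_concurrent_of_preset_left h ha hb hz)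
      ((mem_preset.mp hz).left_mem_places ha) hb (.inl (hab.head (mem_preset.mp hz)))
  · obtain ⟨z, hz⟩ := preset_nonempty ha
    obtain ⟨m, hm, ham⟩ := hpred hb
    exact unordered (mem_concurrent_of_preset_preset h ha hb hz hm)
      ((mem_preset.mp hz).left_mem_places ha) ((mem_preset.mp hm).left_mem_places hb)
      (.inl (ham.head (mem_preset.mp hz)))

theorem Sound.exists_isFiringSeq_enabled (hsound : W.Sound)
    (hM : W.Reachable W.initialMarking M) (hMy : 1 ≤ M y) (hys : W.postset y = {s}) :
    ∃ σ, W.IsFiringSeq M σ ∧ (∀ t ∈ σ, ReflTransGen W.Flows t s) ∧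
      W.Enabled (W.fireSeq M σ) s := by
  classical
  have hy : y ≠ W.sink := by
    rintro rfl
    simp [W.sink_no_post] at hys
  obtain ⟨ts, hts, hend⟩ := reachable_iff_exists_isFiringSeq.mp (hsound.1 M hM).1
  have h0 : W.fireSeq M ts y = 0 := by simp [hend, terminalMarking, hy]
  obtain ⟨ts', hts', hs⟩ := hts.exists_enabled
    (fun t h => Finset.mem_singleton.mp (hys ▸ mem_postset.mpr h)) hMy h0
  obtain ⟨hσ, hle⟩ := hts'.filter (S := {z | ReflTransGen W.Flows z s})
    (fun _ _ hab hb => hb.head hab) fun _ _ => le_rfl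
  refine ⟨_, hσ, fun t ht => by simpa using (List.mem_filter.mp ht).2, hs.1, fun p hp => ?_⟩
  exact (hs.2 p hp).trans (hle p (.single (mem_preset.mp hp)))

theorem Sound.exists_reachable_marked_enabled (hsound : W.Sound)
    (hM : W.Reachable W.initialMarking M) (hMx : 1 ≤ M x) (hMy : 1 ≤ M y)
    (hys : W.postset y = {s}) (hxs : ¬ ReflTransGen W.Flows x s) :
    ∃ M', W.Reachable W.initialMarking M' ∧ 1 ≤ M' x ∧ W.Enabled M' s := by
  obtain ⟨σ, hσ, hσs, hs⟩ := hsound.exists_isFiringSeq_enabled hM hMy hys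
  refine ⟨_, hM.trans (reachable_iff_exists_isFiringSeq.mpr ⟨σ, hσ, rfl⟩), ?_, hs⟩
  exact hMx.trans (le_fireSeq_of_notMem_preset fun t ht hxt =>
    hxs ((hσs t ht).head (mem_preset.mp hxt)))

theorem Sound.exists_reachable_enabled_enabled (hsound : W.Sound)
    (hM : W.Reachable W.initialMarking M) (hx : W.Enabled M x) (hyx : y ∉ W.preset x)
    (hMy : 1 ≤ M y) (hys : W.postset y = {s}) (hxs : ¬ ReflTransGen W.Flows x s) :
    ∃ M', W.Reachable W.initialMarking M' ∧ W.Enabled M' x ∧ W.Enabled M' s := by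
  obtain ⟨σ, hσ, hσs, hs⟩ := hsound.exists_isFiringSeq_enabled (hM.tail ⟨x, hx, rfl⟩)
    (hMy.trans (le_fire_of_notMem_preset hyx)) hys
  obtain ⟨hσ', hx', hfire⟩ := IsFiringSeq.postpone ⟨hx, hσ⟩ fun t ht =>
    Finset.disjoint_left.mpr fun _ hpt hpx =>
      hxs (((hσs t ht).head (mem_preset.mp hpt)).head (mem_postset.mp hpx))
  refine ⟨_, hM.trans (reachable_iff_exists_isFiringSeq.mpr ⟨σ, hσ', rfl⟩), hx', hs.1,
    fun p hp => ?_⟩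
  have hpx : p ∉ W.postset x := fun h => hxs (.head (mem_postset.mp h) (.single (mem_preset.mp hp)))
  have := hs.2 p hp
  rw [← hfire] at this
  exact this.trans (fire_le_of_notMem_postset hpx)

theorem Sound.exists_reachable_active_enabled (hsound : W.Sound) (hfc : W.FreeChoice)
    (hM : W.Reachable W.initialMarking M) (hx : W.Active x M) (hy : y ∈ W.places)
    (hMy : 1 ≤ M y) (hs : s ∈ W.postset y) (hyx : x ∈ W.transitions → y ∉ W.preset x)
    (hxs : ¬ ReflTransGen W.Flows x s) :
    ∃ M', W.Reachable W.initialMarking M' ∧ W.Active x M' ∧ W.Enabled M' s := by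
  by_cases hys : W.postset y = {s}
  · rcases hx with ⟨hxP, hMx⟩ | ⟨hxT, hx⟩
    · obtain ⟨M', hM', hMx', hs'⟩ := hsound.exists_reachable_marked_enabled hM hMx hMy hys hxs
      exact ⟨M', hM', .inl ⟨hxP, hMx'⟩, hs'⟩
    · obtain ⟨M', hM', hx', hs'⟩ :=
        hsound.exists_reachable_enabled_enabled hM hx (hyx hxT) hMy hys hxs
      exact ⟨M', hM', .inr ⟨hxT, hx'⟩, hs'⟩
  obtain ⟨u, hu, hus⟩ : ∃ u ∈ W.postset y, u ≠ s := by
    by_contra! h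
    exact hys (Finset.eq_singleton_iff_unique_mem.mpr ⟨hs, h⟩)
  have hpre := hfc.preset_eq_singleton hy (mem_postset.mp hu) (mem_postset.mp hs) hus
  refine ⟨M, hM, hx, (mem_postset.mp hs).right_mem_transitions hy, fun p hp => ?_⟩
  rw [hpre, Finset.mem_singleton] at hp
  exact hp ▸ hMy

theorem Sound.mem_concurrent_of_not_reflTransGen (hsound : W.Sound) (hfc : W.FreeChoice)
    (hy : y ∈ W.places) (hxy : (x, y) ∈ W.Concurrent W.initialMarking) (hs : s ∈ W.postset y)
    (hxs : ¬ ReflTransGen W.Flows x s) : (x, s) ∈ W.Concurrent W.initialMarking := by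
  have hyx (hxT : x ∈ W.transitions) : y ∉ W.preset x := fun h =>
    ne_of_mem_concurrent (mem_concurrent_of_preset_left hxy hxT hy h) rfl
  obtain ⟨M, hM, hMx, hMy⟩ := exists_reachable_active_of_mem_concurrent hxy
  obtain ⟨M', hM', hx', hs'⟩ :=
    hsound.exists_reachable_active_enabled hfc hM hMx hy (hMy.one_le hy) hs hyx hxs
  have hxs' : x ≠ s := fun h => hxs (h ▸ .refl)
  refine mem_concurrent_iff.mpr ⟨hxs', ⟨M', hM', hx', .inr ⟨hs'.1, hs'⟩⟩,
    fun _ hsP => absurd hs'.1 (notMem_transitions_of_mem_places hsP), fun hxP _ z hz => ?_,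
    fun hxT _ z hz z' hz' => ?_⟩
  · have hzx : z ≠ x := fun h => hxs (h ▸ .single (mem_preset.mp hz))
    exact mem_concurrent_of_marked_places ((mem_preset.mp hz).left_mem_places hs'.1) hxP hzx
      hM' (hs'.2 z hz) (hx'.one_le hxP)
  · have hzz' : z ≠ z' := by
      rintro rfl
      have hzP := (mem_preset.mp hz).left_mem_places hxT
      have hpre := hfc.preset_eq_singleton hzP (mem_preset.mp hz) (mem_preset.mp hz') hxs'
      have hyz : y = z := Finset.mem_singleton.mp (hpre ▸ mem_preset.mpr (mem_postset.mp hs))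
      exact hyx hxT (hyz ▸ hz)
    exact mem_concurrent_of_marked_places ((mem_preset.mp hz).left_mem_places hxT)
      ((mem_preset.mp hz').left_mem_places hs'.1) hzz' hM' ((hx'.enabled hxT).2 z hz)
      (hs'.2 z' hz')

end WorkflowNet

/-- In a sound acyclic free-choice workflow net: for every place `y`, every node `x`
concurrent with `y`, and every transition `s ∈ y•`, there is no acyclic path from `x`
to `s` iff `x` and `s` are concurrent. -/
theorem case2_no_path_iff_concurrent {α : Type} [DecidableEq α] (W : WorkflowNet α)
    (hfc : W.toPetriNet.FreeChoice) (hacyc : W.toPetriNet.Acyclic) (hsound : W.Sound) :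
    ∀ y ∈ W.places, ∀ x : α,
      (x, y) ∈ W.toPetriNet.Concurrent W.initialMarking →
      ∀ s ∈ W.toPetriNet.postset y, s ∈ W.transitions →
        (¬ W.toPetriNet.HasAcyclicPath x s ↔
          (x, s) ∈ W.toPetriNet.Concurrent W.initialMarking) := by
  intro y hy x hxy s hs _
  obtain ⟨M, -, hMx, -⟩ := PetriNet.exists_reachable_active_of_mem_concurrent hxy
  rw [hacyc.hasAcyclicPath_iff, and_iff_right hMx.mem_nodes]
  exact ⟨hsound.mem_concurrent_of_not_reflTransGen hfc hy hxy hs,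
    hsound.not_reflTransGen_of_mem_concurrent hfc hacyc⟩
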